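/- arXiv:1411.5793 — 3 statements merged into one kernel-verified Lean document; each statement's English description precedes it below -/
import Mathlib

section
/- Let a and b be coprime positive integers. Then the number of integers n with 0 ≤ n ≤ ab - a - b - 1 that can be written as n = αa + βb with α, β nonnegative integers is exactly (a-1)(b-1)/2. -/
/-!
Write every integer as `n = x * a + y * b` with `0 ≤ x < b`; for coprime `a, b` this
representation is unique, and `n ≥ 0` is representable exactly when `y ≥ 0`. With
`N = a * b - a - b`, the canonical representation of `N - n` is `(b - 1 - x) * a + (-1 - y) * b`,
so exactly one of `n` and `N - n` is representable. Hence `n ↦ N - n` swaps the representable and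
the non-representable numbers in `[0, N]`, and half of the `N + 1 = (a - 1) * (b - 1)` numbers
there are representable; `N` itself is not, since `0` is.
-/

open Finset

section Representation

variable {a b : ℕ}

theorem Nat.Coprime.exists_int_repr (hb : 0 < b) (hab : a.Coprime b) (n : ℤ) :
    ∃ x y : ℤ, 0 ≤ x ∧ x < b ∧ n = x * a + y * b := by
  obtain ⟨u, v, huv⟩ := Nat.isCoprime_iff_coprime.mpr hab
  have hB : (0 : ℤ) < b := by exact_mod_cast hb
  refine ⟨n * u % b, n * v + n * u / b * a, Int.emod_nonneg _ hB.ne', Int.emod_lt_of_pos _ hB, ?_⟩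
  linear_combination (-n) * huv - (a : ℤ) * Int.emod_add_mul_ediv (n * u) b

theorem Nat.Coprime.int_repr_snd_unique (hab : a.Coprime b) {x₁ y₁ x₂ y₂ : ℤ}
    (hx₁ : 0 ≤ x₁) (hx₁b : x₁ < b) (hx₂ : 0 ≤ x₂) (hx₂b : x₂ < b)
    (he : x₁ * a + y₁ * b = x₂ * a + y₂ * b) : y₁ = y₂ := by
  have hdvd : (b : ℤ) ∣ (x₁ - x₂) * a := ⟨y₂ - y₁, by linarith⟩
  have hx : x₁ - x₂ = 0 :=
    Int.eq_zero_of_abs_lt_dvd ((Nat.isCoprime_iff_coprime.mpr hab).symm.dvd_of_dvd_mul_right hdvd)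
      (abs_sub_lt_iff.mpr ⟨by linarith, by linarith⟩)
  exact mul_right_cancel₀ (by omega : (b : ℤ) ≠ 0) (by linear_combination he - (a : ℤ) * hx)

theorem Nat.Coprime.representable_iff_repr_snd_nonneg (hab : a.Coprime b) {n : ℕ} {x y : ℤ}
    (hx : 0 ≤ x) (hxb : x < b) (hn : (n : ℤ) = x * a + y * b) :
    (∃ α β : ℕ, n = α * a + β * b) ↔ 0 ≤ y := by
  constructor
  · rintro ⟨α, β, rfl⟩
    have hb : 0 < b := by omega
    -- reduce `α` modulo `b` to reach the canonical representation
    have hnat : α * a + β * b = α % b * a + (β + α / b * a) * b := by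
      conv_lhs => rw [← Nat.mod_add_div α b]
      ring
    have he : ((α % b : ℕ) : ℤ) * a + ((β : ℤ) + (α / b : ℕ) * a) * b = x * a + y * b := by
      rw [← hn, hnat]
      push_cast [Int.natCast_mod, Int.natCast_div]
      ring
    rw [← hab.int_repr_snd_unique (by positivity) (by exact_mod_cast Nat.mod_lt _ hb) hx hxb he]
    positivity
  · intro hy
    refine ⟨x.toNat, y.toNat, ?_⟩
    rw [← Int.toNat_of_nonneg hx, ← Int.toNat_of_nonneg hy] at hn
    exact_mod_cast hn

theorem Nat.Coprime.representable_iff_not_representable_sub (hab : a.Coprime b)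
    (ha : 1 < a) (hb : 1 < b) {n : ℕ} (hn : n ≤ a * b - a - b) :
    (∃ α β : ℕ, n = α * a + β * b) ↔ ¬ ∃ α β : ℕ, a * b - a - b - n = α * a + β * b := by
  have hab_le : a + b ≤ a * b := Nat.add_le_mul ha hb
  obtain ⟨x, y, hx, hxb, hrepr⟩ := hab.exists_int_repr (by omega) n
  have hrepr' : ((a * b - a - b - n : ℕ) : ℤ) = ((b : ℤ) - 1 - x) * a + (-1 - y) * b := by
    rw [Nat.cast_sub hn, Nat.cast_sub (by omega : b ≤ a * b - a),
      Nat.cast_sub (by omega : a ≤ a * b), hrepr]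
    push_cast
    ring
  rw [hab.representable_iff_repr_snd_nonneg hx hxb hrepr,
    hab.representable_iff_repr_snd_nonneg (by omega) (by omega) hrepr']
  omega

end Representation

theorem Finset.two_mul_card_filter_range_of_iff_not_sub {P : ℕ → Prop} [DecidablePred P] {N : ℕ}
    (hP : ∀ n ≤ N, P n ↔ ¬ P (N - n)) : 2 * #{n ∈ range (N + 1) | P n} = N + 1 := by
  have hswap : #{n ∈ range (N + 1) | P n} = #{n ∈ range (N + 1) | ¬ P n} := by
    refine card_nbij' (N - ·) (N - ·) ?_ ?_ ?_ ?_ <;> intro n hn <;>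
      simp only [coe_filter, Set.mem_ofPred_eq, mem_range] at hn ⊢
    · exact ⟨by omega, (hP n (by omega)).mp hn.2⟩
    · refine ⟨by omega, ?_⟩
      rw [hP _ (by omega), Nat.sub_sub_self (by omega)]
      exact hn.2
    all_goals omega
  rw [two_mul]
  nth_rw 2 [hswap]
  rw [card_filter_add_card_filter_not, card_range]

theorem stmt_0_general (a b : ℕ) (hab : Nat.Coprime a b) :
    {n : ℕ | n < a * b - a - b ∧ ∃ α β : ℕ, n = α * a + β * b}.ncard
      = (a - 1) * (b - 1) / 2 := by
  classical
  by_cases hdeg : a ≤ 1 ∨ b ≤ 1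
  · have hN : a * b - a - b = 0 := by
      have : a * b ≤ a + b := by rcases hdeg with h | h <;> nlinarith
      omega
    have hrhs : (a - 1) * (b - 1) = 0 := by rcases hdeg with h | h <;> simp [Nat.sub_eq_zero_of_le h]
    simp [hN, hrhs]
  obtain ⟨ha, hb⟩ : 1 < a ∧ 1 < b := by omega
  have hN1 : a * b - a - b + 1 = (a - 1) * (b - 1) := by
    have := Nat.add_le_mul ha hb
    zify [this, ha.le, hb.le, (by omega : a ≤ a * b), (by omega : b ≤ a * b - a)]
    ring
  set N := a * b - a - b
  have hsym (n : ℕ) (hn : n ≤ N) := hab.representable_iff_not_representable_sub ha hb hn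
  have hN : ¬ ∃ α β : ℕ, N = α * a + β * b := by
    simpa using (hsym 0 (Nat.zero_le _)).mp ⟨0, 0, by simp⟩
  have hset : {n : ℕ | n < N ∧ ∃ α β : ℕ, n = α * a + β * b}
      = ↑{n ∈ range (N + 1) | ∃ α β : ℕ, n = α * a + β * b} := by
    ext n
    simp only [Set.mem_ofPred_eq, coe_filter, mem_range]
    refine ⟨fun h => ⟨by omega, h.2⟩, fun h => ⟨?_, h.2⟩⟩
    exact lt_of_le_of_ne (by omega) (by rintro rfl; exact hN h.2)
  have hcount := two_mul_card_filter_range_of_iff_not_sub hsym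
  rw [hset, Set.ncard_coe_finset]
  omega

theorem stmt_0 (a b : ℕ) (ha : 0 < a) (hb : 0 < b) (hab : Nat.Coprime a b) :
    {n : ℕ | n < a * b - a - b ∧ ∃ α β : ℕ, n = α * a + β * b}.ncard
      = (a - 1) * (b - 1) / 2 :=
  stmt_0_general a b hab
end

section
/- Let a, b be coprime positive integers with a, b ≥ 2, and let N = (a-1)(b-1)/2. Exactly half of the 2N pairs (α,β) ∈ ℤ≥0² with α ≤ b-2, β ≤ a-2 satisfy αa + βb ≤ 2N - 2. -/
/-!
The reflection `(α, β) ↦ (b - 2 - α, a - 2 - β)` is an involution of the box whose weights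
`α a + β b` pair up to `(b - 2) a + (a - 2) b = 4N - 2`. No weight equals the middle value `2N - 1`:
that would give `(α + 1) a + (β + 1) b = a b`, impossible for coprime `a, b`. Hence exactly one
point of each pair has weight `≤ 2N - 2`.
-/

open Finset

theorem Nat.Coprime.two_dvd_sub_one_mul_sub_one {a b : ℕ} (hab : a.Coprime b) :
    2 ∣ (a - 1) * (b - 1) := by
  rcases Nat.even_or_odd a with ha | ha
  · have hb : Odd b := (hab.coprime_dvd_left ha.two_dvd).odd_of_left
    exact (Nat.Odd.sub_odd hb odd_one).two_dvd.mul_left _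
  · exact (Nat.Odd.sub_odd ha odd_one).two_dvd.mul_right _

theorem Finset.two_mul_card_filter_of_involution {α : Type*} {s : Finset α} {p : α → Prop}
    [DecidablePred p] (f : α → α) (hf : ∀ x ∈ s, f x ∈ s) (hff : ∀ x ∈ s, f (f x) = x)
    (hp : ∀ x ∈ s, p (f x) ↔ ¬ p x) : 2 * #(s.filter p) = #s := by
  have hcard : #(s.filter p) = #(s.filter (¬ p ·)) := by
    refine card_nbij' f f ?_ ?_ ?_ ?_ <;>
      simp only [coe_filter, Set.MapsTo, Set.LeftInvOn, Set.mem_ofPred_eq]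
    · exact fun x ⟨hx, hpx⟩ => ⟨hf x hx, fun h => (hp x hx).mp h hpx⟩
    · exact fun x ⟨hx, hpx⟩ => ⟨hf x hx, (hp x hx).mpr hpx⟩
    · exact fun x ⟨hx, _⟩ => hff x hx
    · exact fun x ⟨hx, _⟩ => hff x hx
  have := card_filter_add_card_filter_not (s := s) p
  omega

theorem Nat.Coprime.mul_add_mul_le_iff_not_of_add_eq {a b α β α' β' : ℕ} (hab : a.Coprime b)
    (hα : α + α' + 2 = b) (hβ : β + β' + 2 = a) :
    α * a + β * b ≤ (a - 1) * (b - 1) - 2 ↔ ¬ α' * a + β' * b ≤ (a - 1) * (b - 1) - 2 := by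
  have hmid : (α + 1) * a + (β + 1) * b ≠ a * b :=
    hab.mul_add_mul_ne_mul α.succ_ne_zero β.succ_ne_zero
  have hmid' : (α' + 1) * a + (β' + 1) * b ≠ a * b :=
    hab.mul_add_mul_ne_mul α'.succ_ne_zero β'.succ_ne_zero
  have hM : (a - 1) * (b - 1) = (β + β' + 1) * (α + α' + 1) := by
    rw [show a - 1 = β + β' + 1 by omega, show b - 1 = α + α' + 1 by omega]
  subst hα hβ
  rw [hM]
  have hsum : α * (β + β' + 2) + β * (α + α' + 2) + (α' * (β + β' + 2) + β' * (α + α' + 2)) + 2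
      = 2 * ((β + β' + 1) * (α + α' + 1)) := by ring
  have hX : α * (β + β' + 2) + β * (α + α' + 2) + 1 ≠ (β + β' + 1) * (α + α' + 1) := by
    intro h; apply hmid; linarith
  have hY : α' * (β + β' + 2) + β' * (α + α' + 2) + 1 ≠ (β + β' + 1) * (α + α' + 1) := by
    intro h; apply hmid'; linarith
  omega

theorem stmt_4_general (a b : ℕ) (hab : Nat.Coprime a b)
    (N : ℕ) (hN : N = (a - 1) * (b - 1) / 2) :
    ((Finset.range (b - 1) ×ˢ Finset.range (a - 1)).filter
        (fun p => p.1 * a + p.2 * b ≤ 2 * N - 2)).card = N := by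
  have h2N : 2 * N = (a - 1) * (b - 1) := hN ▸ Nat.mul_div_cancel' hab.two_dvd_sub_one_mul_sub_one
  have half := two_mul_card_filter_of_involution (s := range (b - 1) ×ˢ range (a - 1))
    (p := fun p => p.1 * a + p.2 * b ≤ 2 * N - 2) (fun p => (b - 2 - p.1, a - 2 - p.2))
    (fun p hp => by simp only [mem_product, mem_range] at hp ⊢; omega)
    (fun p hp => by simp only [mem_product, mem_range] at hp; ext <;> dsimp <;> omega)
    (fun p hp => by
      simp only [mem_product, mem_range] at hp
      rw [h2N]
      exact hab.mul_add_mul_le_iff_not_of_add_eq (by omega) (by omega))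
  rw [card_product, card_range, card_range, mul_comm (b - 1), ← h2N] at half
  omega

theorem stmt_4 (a b : ℕ) (ha : 2 ≤ a) (hb : 2 ≤ b) (hab : Nat.Coprime a b)
    (N : ℕ) (hN : N = (a - 1) * (b - 1) / 2) :
    ((Finset.range (b - 1) ×ˢ Finset.range (a - 1)).filter
        (fun p => p.1 * a + p.2 * b ≤ 2 * N - 2)).card = N :=
  stmt_4_general a b hab N hN
end

section
/- Let x, y ∈ ℝ[t] with deg x = a and deg y = b, gcd(a,b) = 1, a, b ≥ 2. Suppose there are N = (a-1)(b-1)/2 pairs (sᵢ, tᵢ) with sᵢ ≠ tᵢ, x(sᵢ) = x(tᵢ), y(sᵢ) = y(tᵢ), and all 2N parameters t₁,...,t_N,s₁,...,s_N distinct. Given any real numbers v₁, ..., v_N, there exists a polynomial h in the span of {x^α y^β : αa + βb ≤ ab - a - b - 1} with h(tᵢ) = h(sᵢ) = vᵢ for all i. -/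
/-!
The monomials `x ^ i * y ^ j` with `i * a + j * b < a * b - a - b` have pairwise distinct degrees
`i * a + j * b` (as `a`, `b` are coprime and `i < b`), so they are linearly independent. The point
reflection `(i, j) ↦ (b - 2 - i, a - 2 - j)` of the box `[0, b - 2] × [0, a - 2]` exchanges these
exponents with those for which `i * a + j * b` exceeds the Frobenius number `a * b - a - b`, which
itself is not of this form; hence there are `(a - 1) * (b - 1) / 2 = N` of them. Every `h` in their span `V` has degree
`< 2 * N` and satisfies `h (s i) = h (t i)`, so if it vanishes at all `t i` it has `2 * N` roots and
is zero: evaluation at `t` is an injective, hence bijective, linear map `V → ℝ ^ N`.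
-/

open Polynomial Finset Module Function

namespace Nat.Coprime

variable {a b : ℕ}

theorem eq_of_mul_add_mul_eq (hab : a.Coprime b) {c d c' d' : ℕ} (hc : c < b) (hc' : c' < b)
    (h : c * a + d * b = c' * a + d' * b) : c = c' ∧ d = d' := by
  have hmod : c * a ≡ c' * a [MOD b] := by
    simpa [Nat.ModEq, Nat.add_mul_mod_self_right] using congrArg (· % b) h
  have hcc : c = c' := (hmod.cancel_right_of_coprime hab.symm).eq_of_lt_of_lt hc hc'
  subst hcc
  exact ⟨rfl, Nat.eq_of_mul_eq_mul_right (by omega) (Nat.add_left_cancel h)⟩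

theorem mul_add_mul_add_add_ne_mul (hab : a.Coprime b) (c d : ℕ) :
    c * a + d * b + a + b ≠ a * b := by
  intro h
  have h' : (c + 1) * a + (d + 1) * b = a * b := by rw [← h]; ring
  have hdvd : a ∣ (d + 1) * b :=
    (Nat.dvd_add_right (_root_.dvd_mul_left a (c + 1))).mp (h' ▸ _root_.dvd_mul_right a b)
  have hd : a ∣ d + 1 := hab.dvd_of_dvd_mul_right hdvd
  have hle : a * b ≤ (d + 1) * b := Nat.mul_le_mul_right b (Nat.le_of_dvd d.succ_pos hd)
  have ha : a = 0 := by nlinarith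
  simp [ha] at hd

end Nat.Coprime

theorem lt_sub_one_of_mul_add_mul_lt {a b c d : ℕ} (h : c * a + d * b < a * b - a - b) :
    c < b - 1 := by
  refine Nat.lt_of_mul_lt_mul_right (a := a) ?_
  rw [Nat.sub_one_mul, mul_comm b a]
  omega

theorem mul_add_mul_add_reflect_eq {a b c d : ℕ} (hc : c < b - 1) (hd : d < a - 1) :
    c * a + d * b + ((b - 2 - c) * a + (a - 2 - d) * b) = 2 * (a * b - a - b) := by
  have hab : a + b ≤ a * b := Nat.add_le_mul (by omega) (by omega)
  zify [(by omega : c ≤ b - 2), (by omega : d ≤ a - 2), (by omega : 2 ≤ a),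
    (by omega : 2 ≤ b), (by omega : a ≤ a * b), (by omega : b ≤ a * b - a)]
  ring

def exponentsBelowFrobenius (a b : ℕ) : Finset (ℕ × ℕ) :=
  {p ∈ range (b - 1) ×ˢ range (a - 1) | p.1 * a + p.2 * b < a * b - a - b}

theorem mem_exponentsBelowFrobenius {a b : ℕ} {p : ℕ × ℕ} :
    p ∈ exponentsBelowFrobenius a b ↔ p.1 * a + p.2 * b < a * b - a - b := by
  simp only [exponentsBelowFrobenius, mem_filter, mem_product, mem_range]
  refine ⟨fun h => h.2, fun h => ⟨⟨?_, ?_⟩, h⟩⟩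
  · exact lt_sub_one_of_mul_add_mul_lt (a := a) (d := p.2) h
  · exact lt_sub_one_of_mul_add_mul_lt (a := b) (d := p.1) (by rw [mul_comm b a, add_comm]; omega)

theorem setOf_mul_add_mul_le_eq_exponentsBelowFrobenius {a b : ℕ} (ha : 2 ≤ a) (hb : 2 ≤ b)
    (hab : a.Coprime b) :
    {p : ℕ × ℕ | p.1 * a + p.2 * b ≤ a * b - a - b - 1} = exponentsBelowFrobenius a b := by
  have hF : a + b < a * b :=
    (Nat.add_le_mul ha hb).lt_of_ne (by simpa using hab.mul_add_mul_add_add_ne_mul 0 0)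
  ext p
  rw [mem_coe, mem_exponentsBelowFrobenius, Set.mem_ofPred_eq]
  omega

theorem two_mul_card_exponentsBelowFrobenius {a b : ℕ} (hab : a.Coprime b) :
    2 * #(exponentsBelowFrobenius a b) = (a - 1) * (b - 1) := by
  rw [exponentsBelowFrobenius, mul_comm (a - 1)]
  set R := range (b - 1) ×ˢ range (a - 1)
  let σ : ℕ × ℕ → ℕ × ℕ := fun p => (b - 2 - p.1, a - 2 - p.2)
  have hσ : #{p ∈ R | p.1 * a + p.2 * b < a * b - a - b} =
      #{p ∈ R | ¬ p.1 * a + p.2 * b < a * b - a - b} := by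
    refine card_nbij' σ σ ?_ ?_ ?_ ?_ <;> rintro ⟨c, d⟩ hp <;>
      simp only [R, σ, coe_filter, mem_product, mem_range, Set.mem_ofPred_eq] at hp ⊢ <;>
      have hsum := mul_add_mul_add_reflect_eq hp.1.1 hp.1.2
    · omega
    · have hne := hab.mul_add_mul_add_add_ne_mul c d
      have hab' : a + b ≤ a * b := Nat.add_le_mul (by omega) (by omega)
      omega
    · ext <;> simp only <;> omega
    · ext <;> simp only <;> omega
  have hsplit := card_filter_add_card_filter_not (s := R)
    (fun p : ℕ × ℕ => p.1 * a + p.2 * b < a * b - a - b)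
  rw [card_product, card_range, card_range] at hsplit
  omega

theorem Polynomial.linearIndependent_of_injective_natDegree {R ι : Type*} [CommRing R]
    [IsDomain R] {f : ι → R[X]} (hf : ∀ i, f i ≠ 0) (hdeg : Injective (natDegree ∘ f)) :
    LinearIndependent R f := by
  refine linearIndependent_iff'.mpr fun s g hsum i hi => by_contra fun hgi => ?_
  have hdeg_smul : ∀ j, g j ≠ 0 → (g j • f j).degree = (f j).natDegree := fun j hj => by
    rw [smul_eq_C_mul, degree_C_mul hj, degree_eq_natDegree (hf j)]
  have hpairwise :
      {j | j ∈ s ∧ g j • f j ≠ 0}.Pairwise (Ne on degree ∘ fun j => g j • f j) := by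
    intro j ⟨_, hj⟩ k ⟨_, hk⟩ hjk
    simp only [onFun, comp_apply, hdeg_smul j (left_ne_zero_of_smul hj),
      hdeg_smul k (left_ne_zero_of_smul hk)]
    exact fun h => hjk (hdeg (Nat.cast_injective h))
  have hsup := degree_sum_eq_of_disjoint _ s hpairwise
  rw [hsum, degree_zero, eq_comm, Finset.sup_eq_bot_iff] at hsup
  simpa [hdeg_smul i hgi] using hsup i hi

theorem Polynomial.exists_mem_forall_eval_eq_of_natDegree_lt {K ι : Type*} [Field K] [Fintype ι]
    (V : Submodule K K[X]) [FiniteDimensional K V] (hV : finrank K V = Fintype.card ι)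
    (hdeg : ∀ p ∈ V, p.natDegree < 2 * Fintype.card ι) {s t : ι → K}
    (hinj : Injective (Sum.elim t s)) (heval : ∀ i, ∀ p ∈ V, p.eval (s i) = p.eval (t i))
    (v : ι → K) : ∃ h ∈ V, ∀ i, h.eval (t i) = v i ∧ h.eval (s i) = v i := by
  let L : V →ₗ[K] ι → K := LinearMap.pi fun i => (leval (t i)).comp V.subtype
  have hL : Injective L := by
    refine (injective_iff_map_eq_zero L).mpr fun ⟨p, hp⟩ hLp => Subtype.ext ?_
    have ht : ∀ i, p.eval (t i) = 0 := fun i => congrFun hLp i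
    refine eq_zero_of_natDegree_lt_card_of_eval_eq_zero p hinj ?_ ?_
    · rintro (i | i)
      · exact ht i
      · exact (heval i p hp).trans (ht i)
    · simpa [two_mul] using hdeg p hp
  obtain ⟨⟨h, hh⟩, hLh⟩ := (LinearMap.injective_iff_surjective_of_finrank_eq_finrank
    (by simpa using hV) |>.mp hL) v
  have ht : ∀ i, h.eval (t i) = v i := fun i => congrFun hLh i
  exact ⟨h, hh, fun i => ⟨ht i, (heval i h hh).trans (ht i)⟩⟩

theorem Polynomial.natDegree_pow_mul_pow {R : Type*} [CommRing R] [NoZeroDivisors R]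
    {x y : R[X]} (hx : x ≠ 0) (hy : y ≠ 0) (m n : ℕ) :
    (x ^ m * y ^ n).natDegree = m * x.natDegree + n * y.natDegree := by
  rw [natDegree_mul (pow_ne_zero _ hx) (pow_ne_zero _ hy), natDegree_pow, natDegree_pow]

theorem Polynomial.linearIndependent_pow_mul_pow {R : Type*} [CommRing R] [IsDomain R]
    {x y : R[X]} (hx : x ≠ 0) (hy : y ≠ 0) (hxy : x.natDegree.Coprime y.natDegree)
    {s : Set (ℕ × ℕ)} (hs : ∀ p ∈ s, p.1 < y.natDegree) :
    LinearIndependent R fun p : s => x ^ p.1.1 * y ^ p.1.2 := by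
  refine linearIndependent_of_injective_natDegree (fun _ => mul_ne_zero (pow_ne_zero _ hx)
    (pow_ne_zero _ hy)) fun p q hpq => ?_
  simp only [comp_apply, natDegree_pow_mul_pow hx hy] at hpq
  obtain ⟨h1, h2⟩ := hxy.eq_of_mul_add_mul_eq (hs _ p.2) (hs _ q.2) hpq
  exact Subtype.ext (Prod.ext h1 h2)

theorem Polynomial.natDegree_le_of_mem_span {R : Type*} [Semiring R] {s : Set R[X]} {n : ℕ}
    (hs : ∀ q ∈ s, q.natDegree ≤ n) {p : R[X]} (hp : p ∈ Submodule.span R s) :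
    p.natDegree ≤ n :=
  natDegree_le_iff_degree_le.mpr <| mem_degreeLE.mp <| Submodule.span_le.mpr
    (fun q hq => mem_degreeLE.mpr (natDegree_le_iff_degree_le.mp (hs q hq))) hp

theorem stmt_9_general (a b : ℕ) (ha : 2 ≤ a) (hb : 2 ≤ b) (hab : Nat.Coprime a b)
    (x y : Polynomial ℝ) (hx : x.natDegree = a) (hy : y.natDegree = b)
    (N : ℕ) (hN : N = (a - 1) * (b - 1) / 2)
    (s t : Fin N → ℝ)
    (hxeq : ∀ i, x.eval (s i) = x.eval (t i))
    (hyeq : ∀ i, y.eval (s i) = y.eval (t i))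
    (hdistinct : Function.Injective (Sum.elim t s : Fin N ⊕ Fin N → ℝ)) :
    ∀ v : Fin N → ℝ, ∃ h ∈ Submodule.span ℝ
      ((fun p : ℕ × ℕ => x ^ p.1 * y ^ p.2) ''
        {p : ℕ × ℕ | p.1 * a + p.2 * b ≤ a * b - a - b - 1}),
      ∀ i : Fin N, h.eval (t i) = v i ∧ h.eval (s i) = v i := by
  have hx0 : x ≠ 0 := ne_zero_of_natDegree_gt (hx ▸ ha)
  have hy0 : y ≠ 0 := ne_zero_of_natDegree_gt (hy ▸ hb)
  rw [setOf_mul_add_mul_le_eq_exponentsBelowFrobenius ha hb hab, Set.image_eq_range]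
  set S := exponentsBelowFrobenius a b
  have hcard : 2 * #S = (a - 1) * (b - 1) := two_mul_card_exponentsBelowFrobenius hab
  have hrect : (a - 1) * (b - 1) = a * b - a - b + 1 := by
    rw [Nat.sub_one_mul, Nat.mul_sub_one]
    have := Nat.add_le_mul ha hb
    omega
  have hli := linearIndependent_pow_mul_pow hx0 hy0 (hx ▸ hy ▸ hab) (s := S) fun p hp => hy ▸
    (lt_sub_one_of_mul_add_mul_lt (mem_exponentsBelowFrobenius.mp hp)).trans_le (Nat.sub_le b 1)
  have := FiniteDimensional.span_of_finite ℝ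
    (Set.finite_range fun p : (S : Set (ℕ × ℕ)) => x ^ p.1.1 * y ^ p.1.2)
  intro v
  refine exists_mem_forall_eval_eq_of_natDegree_lt _ ?_ ?_ hdistinct ?_ v
  · rw [finrank_span_eq_card hli, Fintype.card_fin]
    simp only [coe_sort_coe, Fintype.card_coe]
    omega
  · refine fun p hp => (natDegree_le_of_mem_span (n := a * b - a - b - 1) ?_ hp).trans_lt ?_
    · rintro _ ⟨q, rfl⟩
      have hq := mem_exponentsBelowFrobenius.mp q.2
      rw [natDegree_pow_mul_pow hx0 hy0, hx, hy]
      omega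
    · rw [Fintype.card_fin]
      omega
  · exact fun i p hp => LinearMap.eqOn_span (f := leval (s i)) (g := leval (t i))
      (by rintro _ ⟨q, rfl⟩; simp [hxeq i, hyeq i]) hp

theorem stmt_9 (a b : ℕ) (ha : 2 ≤ a) (hb : 2 ≤ b) (hab : Nat.Coprime a b)
    (x y : Polynomial ℝ) (hx : x.natDegree = a) (hy : y.natDegree = b)
    (N : ℕ) (hN : N = (a - 1) * (b - 1) / 2)
    (s t : Fin N → ℝ)
    (hst : ∀ i, s i ≠ t i)
    (hxeq : ∀ i, x.eval (s i) = x.eval (t i))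
    (hyeq : ∀ i, y.eval (s i) = y.eval (t i))
    (hdistinct : Function.Injective (Sum.elim t s : Fin N ⊕ Fin N → ℝ)) :
    ∀ v : Fin N → ℝ, ∃ h ∈ Submodule.span ℝ
      ((fun p : ℕ × ℕ => x ^ p.1 * y ^ p.2) ''
        {p : ℕ × ℕ | p.1 * a + p.2 * b ≤ a * b - a - b - 1}),
      ∀ i : Fin N, h.eval (t i) = v i ∧ h.eval (s i) = v i :=
  stmt_9_general a b ha hb hab x y hx hy N hN s t hxeq hyeq hdistinct
end
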